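/- Let i ≥ 1 be a natural number and let Λ be any type. There is no view-distance-i verifier A over the label type Λ satisfying both: (error-tolerant completeness) for every n ≥ 1 and every connected acyclic simple graph G on Fin n, there exists an oracular labeling L_O : Fin n → Λ such that every labeling L : Fin n → Λ that differs from L_O at no more than i vertices satisfies A(G, L, v) = true for every vertex v; and (soundness) for every n and every connected simple graph G on Fin n that contains a cycle, for every labeling L : Fin n → Λ there exists a vertex v with A(G, L, v) = false. -/

import Mathlib

/-- `A` is a view-distance-`d` verifier over the label type `Λ`: its verdict at a
vertex is invariant under labeled pointed isomorphisms of radius-`d` balls. -/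
def IsLocalVerifier (Λ : Type*) (d : ℕ)
    (A : ∀ n : ℕ, SimpleGraph (Fin n) → (Fin n → Λ) → Fin n → Bool) : Prop :=
  ∀ (n n' : ℕ) (G : SimpleGraph (Fin n)) (G' : SimpleGraph (Fin n'))
    (L : Fin n → Λ) (L' : Fin n' → Λ) (v : Fin n) (v' : Fin n')
    (φ : G.induce {u | G.dist v u ≤ d} ≃g G'.induce {u | G'.dist v' u ≤ d})
    (hv : G.dist v v ≤ d),
    (↑(φ ⟨v, hv⟩) = v') →
    (∀ u : {u | G.dist v u ≤ d}, L' ↑(φ u) = L ↑u) →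
    A n G L v = A n' G' L' v'

/-!
The path on `4i + 2` vertices is a tree, so it carries an oracle labeling `L_O`. Copy the
labels of its middle segment `[i, 3i + 1]` onto the cycle of length `2i + 2`; soundness yields
a cycle vertex `v` that rejects. Wrapping the path around the cycle (`p ↦ p mod (2i + 2)`) maps
the radius-`i` ball of the path around the segment vertex `w` over `v` isomorphically onto the
radius-`i` ball of the cycle around `v`, which is everything but the antipode of `v`. Relabel
that path ball by the cycle labels: only ball vertices outside the middle segment change, and
there are at most `i` of them. So the verifier must accept at `w`, although its view there is
the view of the rejecting vertex `v`.
-/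

open SimpleGraph
open scoped Fin.NatCast

lemma Fin.eq_of_natCast_eq_natCast {m a b : ℕ} [NeZero m] (h : (a : Fin m) = b)
    (hab : a < b + m) (hba : b < a + m) : a = b :=
  Nat.ModEq.eq_of_abs_lt (Fin.ext_iff.mp h) (abs_sub_lt_iff.mpr ⟨by omega, by omega⟩)

namespace SimpleGraph

variable {V W : Type*} {G : SimpleGraph V} {G' : SimpleGraph W}

lemma Walk.apply_le_apply_add_length {f : V → ℕ} (hf : ∀ x y, G.Adj x y → f x ≤ f y + 1)
    {u v : V} (p : G.Walk u v) : f u ≤ f v + p.length := by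
  induction p with
  | nil => simp
  | cons h _ ih => have := hf _ _ h; rw [Walk.length_cons]; omega

lemma Reachable.apply_le_apply_add_dist {f : V → ℕ}
    (hf : ∀ x y, G.Adj x y → f x ≤ f y + 1) {u v : V} (h : G.Reachable u v) :
    f u ≤ f v + G.dist u v := by
  obtain ⟨p, hp⟩ := h.exists_walk_length_eq_dist
  exact hp ▸ p.apply_le_apply_add_length hf

lemma Reachable.dist_map_le (f : G →g G') {u v : V} (h : G.Reachable u v) :
    G'.dist (f u) (f v) ≤ G.dist u v := by
  obtain ⟨p, hp⟩ := h.exists_walk_length_eq_dist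
  exact hp ▸ (dist_le (p.map f)).trans_eq (p.length_map f)

noncomputable def induceIsoOfBijOn {s : Set V} {t : Set W} (f : V → W) (hf : s.BijOn f t)
    (hadj : ∀ x ∈ s, ∀ y ∈ s, G'.Adj (f x) (f y) ↔ G.Adj x y) :
    G.induce s ≃g G'.induce t where
  toEquiv := hf.equiv f
  map_rel_iff' {x y} := hadj x x.2 y y.2

lemma pathGraph_dist_le_of_val_eq_add {n k : ℕ} {a b : Fin n} (h : b.val = a.val + k) :
    (pathGraph n).dist a b ≤ k := by
  induction k generalizing b with
  | zero => simp [Fin.ext h]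
  | succ k ih =>
    have : Nonempty (Fin n) := ⟨a⟩
    let c : Fin n := ⟨a.val + k, by omega⟩
    have hcb : (pathGraph n).Adj c b := pathGraph_adj.mpr (Or.inl (by simp [c]; omega))
    calc (pathGraph n).dist a b ≤ (pathGraph n).dist a c + (pathGraph n).dist c b :=
          Connected.dist_triangle ⟨pathGraph_preconnected n⟩
      _ ≤ k + 1 := by rw [dist_eq_one_iff_adj.mpr hcb]; exact Nat.add_le_add_right (ih rfl) 1

lemma pathGraph_dist_le_iff {n k : ℕ} {a b : Fin n} :
    (pathGraph n).dist a b ≤ k ↔ a.val ≤ b.val + k ∧ b.val ≤ a.val + k := by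
  have hval (x y : Fin n) (h : (pathGraph n).Adj x y) : x.val ≤ y.val + 1 := by
    rcases pathGraph_adj.mp h with h | h <;> omega
  have hab := (pathGraph_preconnected n a b).apply_le_apply_add_dist hval
  have hba := (pathGraph_preconnected n b a).apply_le_apply_add_dist hval
  rw [dist_comm] at hba
  refine ⟨fun h => ⟨by omega, by omega⟩, fun ⟨h₁, h₂⟩ => ?_⟩
  rcases le_total a.val b.val with h | h
  · exact (pathGraph_dist_le_of_val_eq_add (k := b.val - a.val) (by omega)).trans (by omega)
  · rw [dist_comm]
    exact (pathGraph_dist_le_of_val_eq_add (k := a.val - b.val) (by omega)).trans (by omega)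

lemma pathGraph_isBridge {n : ℕ} {a b : Fin n} (h : a.val + 1 = b.val) :
    (pathGraph n).IsBridge s(a, b) := by
  refine isBridge_iff_forall_walk_mem_edges.mpr fun p => ?_
  -- the only edge leaving `{x | x ≤ a}` is `s(a, b)`
  obtain ⟨d, hd, hfst, hsnd⟩ :=
    p.exists_boundary_dart {x | x.val ≤ a.val} (Nat.le_refl _) (by simp; omega)
  simp only [Set.mem_ofPred_eq, not_le] at hfst hsnd
  have hadj := pathGraph_adj.mp d.adj
  have hab : d.toProd = (a, b) := Prod.ext (Fin.ext (by dsimp; omega)) (Fin.ext (by dsimp; omega))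
  have hedge : d.edge = s(a, b) := by rw [Dart.edge, hab]
  exact hedge ▸ List.mem_map_of_mem hd

lemma pathGraph_isAcyclic (n : ℕ) : (pathGraph n).IsAcyclic := by
  refine isAcyclic_iff_forall_adj_isBridge.mpr fun a b hab => ?_
  rcases pathGraph_adj.mp hab with h | h
  · exact pathGraph_isBridge h
  · exact Sym2.eq_swap ▸ pathGraph_isBridge h

lemma cycleGraph_not_isAcyclic {n : ℕ} (hn : 3 ≤ n) : ¬(cycleGraph n).IsAcyclic := by
  obtain ⟨k, rfl⟩ := Nat.exists_eq_add_of_le' hn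
  exact fun h => h _ cycleGraph.isCycle_cycle

lemma cycleGraph_adj_iff_eq_add_one {n : ℕ} {u v : Fin (n + 2)} :
    (cycleGraph (n + 2)).Adj u v ↔ u = v + 1 ∨ v = u + 1 := by
  rw [cycleGraph_adj, sub_eq_iff_eq_add, sub_eq_iff_eq_add, add_comm 1, add_comm 1]

lemma min_le_cycleGraph_dist {n : ℕ} (u v : Fin (n + 2)) :
    min (v - u).val (n + 2 - (v - u).val) ≤ (cycleGraph (n + 2)).dist u v := by
  let g : Fin (n + 2) → ℕ := fun t => min t.val (n + 2 - t.val)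
  have hstep (t : Fin (n + 2)) : g (t + 1) ≤ g t + 1 ∧ g t ≤ g (t + 1) + 1 := by
    simp only [g, Fin.val_add_one]
    split_ifs with ht
    · simp [ht]
    · have := Fin.val_lt_last ht; omega
  have hf (x y : Fin (n + 2)) (h : (cycleGraph (n + 2)).Adj x y) : g (x - u) ≤ g (y - u) + 1 := by
    rcases cycleGraph_adj_iff_eq_add_one.mp h with rfl | rfl
    · simpa only [add_sub_right_comm] using (hstep (y - u)).1
    · simpa only [add_sub_right_comm] using (hstep (x - u)).2
  simpa [g, dist_comm] using (cycleGraph_connected.preconnected v u).apply_le_apply_add_dist hf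

def pathGraph.wrap (n m : ℕ) : pathGraph n →g cycleGraph (m + 2) where
  toFun p := (p.val : Fin (m + 2))
  map_rel' {x y} h := by
    rw [cycleGraph_adj_iff_eq_add_one]
    rcases pathGraph_adj.mp h with h | h
    · exact Or.inr (by rw [← h, Nat.cast_succ])
    · exact Or.inl (by rw [← h, Nat.cast_succ])

section wrap

variable {r N : ℕ} {w : Fin N}

lemma pathGraph.wrap_adj_iff {p q : Fin N} (hp : (pathGraph N).dist w p ≤ r)
    (hq : (pathGraph N).dist w q ≤ r) :
    (cycleGraph (2 * r + 2)).Adj (wrap N (2 * r) p) (wrap N (2 * r) q) ↔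
      (pathGraph N).Adj p q := by
  refine ⟨fun h => ?_, (wrap N (2 * r)).map_adj⟩
  rw [pathGraph_dist_le_iff] at hp hq
  rw [pathGraph_adj]
  rcases cycleGraph_adj_iff_eq_add_one.mp h with h | h
  · have := Fin.eq_of_natCast_eq_natCast (h.trans (Nat.cast_succ _).symm) (by omega) (by omega)
    omega
  · have := Fin.eq_of_natCast_eq_natCast (h.trans (Nat.cast_succ _).symm) (by omega) (by omega)
    omega

lemma pathGraph.wrap_bijOn_ball (hw₁ : r ≤ w.val) (hw₂ : w.val + r < N) :
    Set.BijOn (wrap N (2 * r)) {p | (pathGraph N).dist w p ≤ r}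
      {u | (cycleGraph (2 * r + 2)).dist (wrap N (2 * r) w) u ≤ r} := by
  refine ⟨fun p hp => ((pathGraph_preconnected N w p).dist_map_le _).trans hp,
    fun p hp q hq h => ?_, fun u hu => ?_⟩
  · rw [Set.mem_ofPred_eq, pathGraph_dist_le_iff] at hp hq
    exact Fin.ext (Fin.eq_of_natCast_eq_natCast h (by omega) (by omega))
  · have ht := (min_le_cycleGraph_dist (wrap N (2 * r) w) u).trans hu
    have hu' : ((w.val + (u - wrap N (2 * r) w).val : ℕ) : Fin (2 * r + 2)) = u := by
      rw [Nat.cast_add, Fin.cast_val_eq_self]; exact add_sub_cancel _ _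
    have ht' := (u - wrap N (2 * r) w).isLt
    generalize (u - wrap N (2 * r) w).val = t at ht hu' ht'
    -- past the antipode (`t > r`), `u` is reached by stepping back from `w` instead
    obtain ⟨s, hs, hsw⟩ :
        ∃ s : ℕ, (s : Fin (2 * r + 2)) = u ∧ w.val ≤ s + r ∧ s ≤ w.val + r := by
      rcases le_or_gt t r with h | h
      · exact ⟨w.val + t, hu', by omega⟩
      · refine ⟨w.val + t - (2 * r + 2), Eq.trans (Fin.ext ?_) hu', by omega⟩
        rw [Fin.val_natCast, Fin.val_natCast, ← Nat.add_mod_right (w.val + t - _),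
          Nat.sub_add_cancel (by omega)]
    exact ⟨⟨s, by omega⟩, pathGraph_dist_le_iff.mpr hsw, hs⟩

end wrap

end SimpleGraph

/-- The vertex of the middle segment `[r, 3r + 1]` of the path that wraps onto `x`. -/
def midLift (r : ℕ) (x : Fin (2 * r + 2)) : Fin (4 * r + 2) :=
  ⟨r + (x - r).val, by have := (x - r).isLt; omega⟩

lemma midLift_val_mem (r : ℕ) (x : Fin (2 * r + 2)) :
    r ≤ (midLift r x).val ∧ (midLift r x).val ≤ 3 * r + 1 := by
  have := (x - r).isLt
  exact ⟨Nat.le_add_right _ _, by simp only [midLift]; omega⟩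

lemma wrap_midLift {r : ℕ} (x : Fin (2 * r + 2)) :
    pathGraph.wrap (4 * r + 2) (2 * r) (midLift r x) = x := by
  change ((r + (x - r).val : ℕ) : Fin (2 * r + 2)) = x
  rw [Nat.cast_add, Fin.cast_val_eq_self, add_sub_cancel]

lemma midLift_wrap {r : ℕ} {p : Fin (4 * r + 2)} (h₁ : r ≤ p.val)
    (h₂ : p.val ≤ 3 * r + 1) :
    midLift r (pathGraph.wrap (4 * r + 2) (2 * r) p) = p := by
  have hsub : ((p.val : Fin (2 * r + 2)) - (r : Fin (2 * r + 2))) = ((p.val - r : ℕ) : Fin _) :=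
    (eq_sub_of_add_eq (by rw [← Nat.cast_add, Nat.sub_add_cancel h₁])).symm
  refine Fin.ext ?_
  change r + ((p.val : Fin (2 * r + 2)) - (r : Fin _)).val = p.val
  rw [hsub, Fin.val_natCast, Nat.mod_eq_of_lt (by omega)]
  omega

lemma ncard_ball_diff_segment_le {r N : ℕ} {w : Fin N} (hw₁ : r ≤ w.val)
    (hw₂ : w.val ≤ 3 * r + 1) :
    {p : Fin N | (pathGraph N).dist w p ≤ r ∧ (p.val < r ∨ 3 * r + 1 < p.val)}.ncard ≤ r :=
  calc _ ≤ (Set.Ico (w.val - r) r ∪ Set.Ioc (3 * r + 1) (w.val + r)).ncard := by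
        refine Set.ncard_le_ncard_of_injOn Fin.val (fun p ⟨hp, hout⟩ => ?_)
          Fin.val_injective.injOn ((Set.finite_Ico _ _).union (Set.finite_Ioc _ _))
        rw [pathGraph_dist_le_iff] at hp
        simp only [Set.mem_union, Set.mem_Ico, Set.mem_Ioc]
        omega
    _ ≤ (Set.Ico (w.val - r) r).ncard + (Set.Ioc (3 * r + 1) (w.val + r)).ncard :=
        Set.ncard_union_le _ _
    _ ≤ r := by rw [Set.ncard_Ico_nat, Set.ncard_Ioc_nat]; omega

/-- Impossibility of error-resilient verification of cycle absence: no
view-distance-`i` verifier tolerates `i` adversarial label errors in the whole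
graph, with any label type. -/
theorem no_error_tolerant_cycle_absence (i : ℕ) (hi : 1 ≤ i) (Λ : Type) :
    ¬ ∃ A : ∀ n : ℕ, SimpleGraph (Fin n) → (Fin n → Λ) → Fin n → Bool,
      IsLocalVerifier Λ i A ∧
      (∀ (n : ℕ), 1 ≤ n → ∀ G : SimpleGraph (Fin n), G.Connected → G.IsAcyclic →
        ∃ L_O : Fin n → Λ, ∀ L : Fin n → Λ,
          {v : Fin n | L v ≠ L_O v}.ncard ≤ i → ∀ v : Fin n, A n G L v = true) ∧
      (∀ (n : ℕ) (G : SimpleGraph (Fin n)), G.Connected → ¬ G.IsAcyclic →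
        ∀ L : Fin n → Λ, ∃ v : Fin n, A n G L v = false) := by
  rintro ⟨A, hLoc, hComp, hSound⟩
  obtain ⟨L_O, hL_O⟩ := hComp (4 * i + 2) (by omega) (pathGraph _) (pathGraph_connected _)
    (pathGraph_isAcyclic _)
  obtain ⟨v, hv⟩ := hSound (2 * i + 2) (cycleGraph _) cycleGraph_connected
    (cycleGraph_not_isAcyclic (by omega)) (L_O ∘ midLift i)
  set w := midLift i v
  have hw := midLift_val_mem i v
  set π := pathGraph.wrap (4 * i + 2) (2 * i)
  let L : Fin (4 * i + 2) → Λ := fun p =>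
    if (pathGraph _).dist w p ≤ i then L_O (midLift i (π p)) else L_O p
  have hL : {p | L p ≠ L_O p}.ncard ≤ i := by
    refine (Set.ncard_le_ncard fun p hp => ?_).trans (ncard_ball_diff_segment_le hw.1 hw.2)
    by_cases hball : (pathGraph _).dist w p ≤ i
    · refine ⟨hball, by_contra fun hseg => hp ?_⟩
      simp only [L, if_pos hball]
      rw [midLift_wrap (by omega) (by omega)]
    · exact absurd (if_neg hball) hp
  have hagree := hLoc _ _ (pathGraph _) (cycleGraph _) L (L_O ∘ midLift i) w (π w)
    (induceIsoOfBijOn π (pathGraph.wrap_bijOn_ball hw.1 (by omega)) fun p hp q hq =>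
      pathGraph.wrap_adj_iff hp hq) (by simp) rfl fun u => (if_pos u.2).symm
  rw [hL_O L hL w, wrap_midLift, hv] at hagree
  exact absurd hagree (by decide)
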